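/- Deterministic Scheffé-tournament guarantee, realizable case: suppose m : F → ℝ satisfies |m(f) − E_{d^E} f| ≤ ε for all f ∈ F, suppose d^E = d^{π*} for some π* ∈ Π, and let π̂ ∈ Π be any minimizer of π ↦ max_{f∈F} ( E_{d^π} f − m(f) ). Then ‖d^{π̂} − d^E‖₁ ≤ 2ε. -/
import Mathlib


/-!
STATEMENT 2: Deterministic Scheffé-tournament guarantee, realizable case.
-/

open Finset

/-- `p` is a distribution on the finite set `S`: values in `[0,1]` summing to `1`. -/
def IsDist {S : Type*} [Fintype S] (p : S → ℝ) : Prop :=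
  (∀ s, 0 ≤ p s ∧ p s ≤ 1) ∧ ∑ s, p s = 1

/-- Expectation `E_p f = ∑_s p(s) f(s)`. -/
def expct {S : Type*} [Fintype S] (p f : S → ℝ) : ℝ := ∑ s, p s * f s

/-- L¹ distance `‖p − q‖₁ = ∑_s |p(s) − q(s)|`. -/
def l1dist {S : Type*} [Fintype S] (p q : S → ℝ) : ℝ := ∑ s, |p s - q s|

/-- Witness function `f_{p,q}(s) = 1` if `p(s) ≥ q(s)`, else `−1`. -/
noncomputable def witness {S : Type*} (p q : S → ℝ) (s : S) : ℝ :=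
  if q s ≤ p s then 1 else -1

/-- The Scheffé-tournament objective with approximate expectations `m`:
`max_{f ∈ F} ( E_{d^π} f − m(f) )`, where `F = { f_{d^a, d^b} : a ≠ b }`. -/
noncomputable def scheffeObj {S P : Type*} [Fintype S] [Fintype P]
    (d : P → S → ℝ) (m : (S → ℝ) → ℝ) (π : P) : ℝ :=
  sSup {v : ℝ | ∃ a b : P, a ≠ b ∧
    v = expct (d π) (witness (d a) (d b)) - m (witness (d a) (d b))}

lemma witness_key {S : Type*} [Fintype S] (p q : S → ℝ) :
    expct p (witness p q) - expct q (witness p q) = l1dist p q := by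
  unfold expct witness l1dist
  rw [← Finset.sum_sub_distrib]
  apply Finset.sum_congr rfl
  intro s _
  by_cases h : q s ≤ p s
  · simp [h, abs_of_nonneg (sub_nonneg.2 h)]
  · push_neg at h
    simp [not_le.2 h, abs_of_neg (sub_neg.2 h)]; ring

lemma scheffe_bdd {S P : Type*} [Fintype S] [Fintype P]
    (d : P → S → ℝ) (m : (S → ℝ) → ℝ) (π : P) :
    BddAbove {v : ℝ | ∃ a b : P, a ≠ b ∧
      v = expct (d π) (witness (d a) (d b)) - m (witness (d a) (d b))} := by
  apply Set.Finite.bddAbove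
  apply Set.Finite.subset (Set.finite_range
    (fun ab : P × P => expct (d π) (witness (d ab.1) (d ab.2)) - m (witness (d ab.1) (d ab.2))))
  rintro v ⟨a, b, _, rfl⟩
  exact ⟨(a, b), rfl⟩

/-- Deterministic Scheffé-tournament guarantee, realizable case: if `m` is an
`ε`-accurate estimate of `E_{d^E} f` for every witness function `f ∈ F`, the
expert is realizable (`d^E = d^{π*}` for some `π*`), and `π̂` minimizes
`π ↦ max_{f ∈ F} (E_{d^π} f − m(f))`, then `‖d^{π̂} − d^E‖₁ ≤ 2ε`. -/
theorem scheffe_realizable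
    {S P : Type*} [Fintype S] [Nonempty S] [Fintype P]
    (hP : 2 ≤ Fintype.card P)
    (d : P → S → ℝ) (hd : ∀ π, IsDist (d π))
    (dE : S → ℝ) (hdE : IsDist dE)
    (ε : ℝ) (hε : 0 ≤ ε)
    (m : (S → ℝ) → ℝ)
    (hm : ∀ a b : P, a ≠ b →
      |m (witness (d a) (d b)) - expct dE (witness (d a) (d b))| ≤ ε)
    (hreal : ∃ πstar : P, dE = d πstar)
    (πhat : P)
    (hmin : ∀ π : P, scheffeObj d m πhat ≤ scheffeObj d m π) :
    l1dist (d πhat) dE ≤ 2 * ε := by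

  obtain ⟨πstar, rfl⟩ := hreal
  by_cases hne : πhat = πstar
  · subst hne
    simp [l1dist]
    positivity
  -- let f = witness (d πhat) (d πstar)
  have hpair : ∃ a b : P, a ≠ b := by
    obtain ⟨a, b, hab⟩ := Fintype.exists_pair_of_one_lt_card hP
    exact ⟨a, b, hab⟩
  -- scheffeObj at πstar ≤ ε
  have hstar : scheffeObj d m πstar ≤ ε := by
    apply csSup_le
    · obtain ⟨a, b, hab⟩ := hpair
      exact ⟨_, a, b, hab, rfl⟩
    · rintro v ⟨a, b, hab, rfl⟩
      have := hm a b hab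
      have := abs_le.1 this
      linarith [this.1]
  have hmem : expct (d πhat) (witness (d πhat) (d πstar)) - m (witness (d πhat) (d πstar))
      ∈ {v : ℝ | ∃ a b : P, a ≠ b ∧
        v = expct (d πhat) (witness (d a) (d b)) - m (witness (d a) (d b))} :=
    ⟨πhat, πstar, hne, rfl⟩
  have h1 : expct (d πhat) (witness (d πhat) (d πstar)) - m (witness (d πhat) (d πstar))
      ≤ scheffeObj d m πhat := le_csSup (scheffe_bdd d m πhat) hmem
  have h2 : m (witness (d πhat) (d πstar)) - expct (d πstar) (witness (d πhat) (d πstar)) ≤ ε := by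
    have := abs_le.1 (hm πhat πstar hne)
    linarith [this.2]
  have hkey := witness_key (d πhat) (d πstar)
  have hchain := hmin πstar
  linarith
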